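/- In GL(2, Z/4Z), let a = [[3,2],[3,3]], b = [[1,3],[2,3]], c = ab = [[3,3],[1,2]], and let U_1 be the subgroup generated by [[1,2],[0,3]] and [[1,1],[0,3]] and U_2 the subgroup generated by [[1,0],[2,3]] and [[1,0],[1,3]]. Then for every r with 1 ≤ r ≤ 3 no element of U_1 or U_2 is conjugate in GL(2, Z/4Z) to a^r or to b^r, and for every r with 1 ≤ r ≤ 5 no element of U_1 or U_2 is conjugate in GL(2, Z/4Z) to c^r. -/
import Mathlib

set_option maxRecDepth 100000
set_option maxHeartbeats 4000000

/-- `GL(2, ZMod 4)`, the group of invertible 2×2 matrices over `ZMod 4`. -/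
abbrev GL2 : Type := Matrix.GeneralLinearGroup (Fin 2) (ZMod 4)

/-- `a = [[3,2],[3,3]]` as an element of `GL(2, ZMod 4)`. -/
def a : GL2 := ⟨!![3, 2; 3, 3], !![1, 2; 3, 1], by decide, by decide⟩

/-- `b = [[1,3],[2,3]]` as an element of `GL(2, ZMod 4)`. -/
def b : GL2 := ⟨!![1, 3; 2, 3], !![3, 1; 2, 1], by decide, by decide⟩

/-- `c = [[3,3],[1,2]]` as an element of `GL(2, ZMod 4)`. -/
def c : GL2 := ⟨!![3, 3; 1, 2], !![2, 3; 1, 1], by decide, by decide⟩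

/-- `U₁` is the subgroup of `GL(2, ZMod 4)` generated by `[[1,2],[0,3]]` and `[[1,1],[0,3]]`. -/
def U1 : Subgroup GL2 :=
  Subgroup.closure {(⟨!![1, 2; 0, 3], !![1, 2; 0, 3], by decide, by decide⟩ : GL2),
                    (⟨!![1, 1; 0, 3], !![1, 1; 0, 3], by decide, by decide⟩ : GL2)}

/-- `U₂` is the subgroup of `GL(2, ZMod 4)` generated by `[[1,0],[2,3]]` and `[[1,0],[1,3]]`. -/
def U2 : Subgroup GL2 :=
  Subgroup.closure {(⟨!![1, 0; 2, 3], !![1, 0; 2, 3], by decide, by decide⟩ : GL2),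
                    (⟨!![1, 0; 1, 3], !![1, 0; 1, 3], by decide, by decide⟩ : GL2)}

/-! ### Auxiliary machinery -/

/-- 2×2 matrices over `ZMod 4`. -/
abbrev M2 := Matrix (Fin 2) (Fin 2) (ZMod 4)

/-- Scalar-level statement: no invertible `t` conjugates `g` into the upper-triangular
form `!![1,u;0,v]` or the lower-triangular form `!![1,0;u,v]`. -/
def Bad' (g00 g01 g10 g11 : ZMod 4) : Prop :=
  ∀ u v t00 t01 t10 t11 : ZMod 4, (∃ s, (t00 * t11 - t01 * t10) * s = 1) →
    ¬ (t00 * g00 + t01 * g10 = t00 + u * t10 ∧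
       t00 * g01 + t01 * g11 = t01 + u * t11 ∧
       t10 * g00 + t11 * g10 = v * t10 ∧
       t10 * g01 + t11 * g11 = v * t11) ∧
    ¬ (t00 * g00 + t01 * g10 = t00 ∧
       t00 * g01 + t01 * g11 = t01 ∧
       t10 * g00 + t11 * g10 = u * t00 + v * t10 ∧
       t10 * g01 + t11 * g11 = u * t01 + v * t11)

instance (g00 g01 g10 g11 : ZMod 4) : Decidable (Bad' g00 g01 g10 g11) := by
  unfold Bad'; infer_instance

/-- Matrix-level statement corresponding to `Bad'`. -/
def Bad (g : M2) : Prop := ∀ (u v : ZMod 4) (t : M2), (∃ s, t.det * s = 1) →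
  t * g ≠ !![1,u;0,v] * t ∧ t * g ≠ !![1,0;u,v] * t

lemma bad_of (g : M2) (h : Bad' (g 0 0) (g 0 1) (g 1 0) (g 1 1)) : Bad g := by
  intro u v t hdet
  rw [Matrix.det_fin_two] at hdet
  have H := h u v (t 0 0) (t 0 1) (t 1 0) (t 1 1) hdet
  refine ⟨fun he => H.1 ⟨?_, ?_, ?_, ?_⟩, fun he => H.2 ⟨?_, ?_, ?_, ?_⟩⟩
  · simpa [Matrix.mul_apply, Fin.sum_univ_two] using congrFun (congrFun he 0) 0
  · simpa [Matrix.mul_apply, Fin.sum_univ_two] using congrFun (congrFun he 0) 1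
  · simpa [Matrix.mul_apply, Fin.sum_univ_two] using congrFun (congrFun he 1) 0
  · simpa [Matrix.mul_apply, Fin.sum_univ_two] using congrFun (congrFun he 1) 1
  · simpa [Matrix.mul_apply, Fin.sum_univ_two] using congrFun (congrFun he 0) 0
  · simpa [Matrix.mul_apply, Fin.sum_univ_two] using congrFun (congrFun he 0) 1
  · simpa [Matrix.mul_apply, Fin.sum_univ_two] using congrFun (congrFun he 1) 0
  · simpa [Matrix.mul_apply, Fin.sum_univ_two] using congrFun (congrFun he 1) 1

lemma badGL {g : GL2} (m : M2) (h : (g : M2) = m)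
    (hm : Bad' (m 0 0) (m 0 1) (m 1 0) (m 1 1)) : Bad (g : M2) := h ▸ bad_of m hm

/-- The subgroup of matrices of the shape `!![1,*;0,*]`. -/
def T1 : Subgroup GL2 where
  carrier := {x | (x : M2) 0 0 = 1 ∧ (x : M2) 1 0 = 0}
  one_mem' := ⟨rfl, rfl⟩
  mul_mem' := by
    rintro x y ⟨hx0, hx1⟩ ⟨hy0, hy1⟩
    constructor <;>
      simp [Units.val_mul, Matrix.mul_apply, Fin.sum_univ_two, hx0, hx1, hy0, hy1]
  inv_mem' := by
    rintro x ⟨hx0, hx1⟩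
    have h : ((x⁻¹ : GL2) : M2) * (x : M2) = 1 := x.inv_mul
    constructor
    · simpa [Matrix.mul_apply, Fin.sum_univ_two, hx0, hx1, Matrix.one_apply]
        using congrFun (congrFun h 0) 0
    · simpa [Matrix.mul_apply, Fin.sum_univ_two, hx0, hx1, Matrix.one_apply]
        using congrFun (congrFun h 1) 0

/-- The subgroup of matrices of the shape `!![1,0;*,*]`. -/
def T2 : Subgroup GL2 where
  carrier := {x | (x : M2) 0 0 = 1 ∧ (x : M2) 0 1 = 0}
  one_mem' := ⟨rfl, rfl⟩
  mul_mem' := by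
    rintro x y ⟨hx0, hx1⟩ ⟨hy0, hy1⟩
    constructor <;>
      simp [Units.val_mul, Matrix.mul_apply, Fin.sum_univ_two, hx0, hx1, hy0, hy1]
  inv_mem' := by
    rintro x ⟨hx0, hx1⟩
    have h : ((x : GL2) : M2) * ((x⁻¹ : GL2) : M2) = 1 := x.mul_inv
    constructor
    · simpa [Matrix.mul_apply, Fin.sum_univ_two, hx0, hx1, Matrix.one_apply]
        using congrFun (congrFun h 0) 0
    · simpa [Matrix.mul_apply, Fin.sum_univ_two, hx0, hx1, Matrix.one_apply]
        using congrFun (congrFun h 0) 1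

lemma U1_le : U1 ≤ T1 := by
  rw [U1, Subgroup.closure_le]
  rintro x (rfl | rfl) <;> exact ⟨rfl, rfl⟩

lemma U2_le : U2 ≤ T2 := by
  rw [U2, Subgroup.closure_le]
  rintro x (rfl | rfl) <;> exact ⟨rfl, rfl⟩

lemma not_conj {g : GL2} (hg : Bad (g : M2)) {x : GL2} (hx : x ∈ U1 ∨ x ∈ U2) :
    ¬ IsConj g x := by
  intro hc
  obtain ⟨t, ht⟩ := isConj_iff.mp hc
  have hm : (t : M2) * (g : M2) = (x : M2) * (t : M2) := by
    have h2 : t * g = x * t := by rw [← ht]; group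
    simpa [Units.val_mul] using congrArg Units.val h2
  have hdet : ∃ s, (t : M2).det * s = 1 := by
    have hu : IsUnit ((t : M2).det) := (Matrix.isUnit_iff_isUnit_det _).mp ⟨t, rfl⟩
    obtain ⟨u, hu'⟩ := hu
    exact ⟨↑u⁻¹, by rw [← hu', ← Units.val_mul, mul_inv_cancel, Units.val_one]⟩
  rcases hx with h | h
  · obtain ⟨h00, h10⟩ := U1_le h
    have hx' : (x : M2) = !![1, (x : M2) 0 1; 0, (x : M2) 1 1] := by
      conv_lhs => rw [Matrix.eta_fin_two (x : M2)]
      rw [h00, h10]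
    exact (hg ((x : M2) 0 1) ((x : M2) 1 1) t hdet).1 (by rw [hm, ← hx'])
  · obtain ⟨h00, h01⟩ := U2_le h
    have hx' : (x : M2) = !![1, 0; (x : M2) 1 0, (x : M2) 1 1] := by
      conv_lhs => rw [Matrix.eta_fin_two (x : M2)]
      rw [h00, h01]
    exact (hg ((x : M2) 1 0) ((x : M2) 1 1) t hdet).2 (by rw [hm, ← hx'])

/-- No element of `U₁` or `U₂` is conjugate in `GL(2, ZMod 4)` to `aʳ` or `bʳ` for
`1 ≤ r ≤ 3`, nor to `cʳ` for `1 ≤ r ≤ 5`, where `c = ab`. -/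
theorem stmt_18 :
    (∀ r : ℕ, 1 ≤ r → r ≤ 3 → ∀ x : GL2, (x ∈ U1 ∨ x ∈ U2) →
      ¬ IsConj (a ^ r) x ∧ ¬ IsConj (b ^ r) x) ∧
    (∀ r : ℕ, 1 ≤ r → r ≤ 5 → ∀ x : GL2, (x ∈ U1 ∨ x ∈ U2) →
      ¬ IsConj (c ^ r) x) := by
  constructor
  · intro r h1 h3 x hx
    interval_cases r
    · exact ⟨not_conj (badGL !![3,2;3,3] (by decide) (by decide)) hx,
             not_conj (badGL !![1,3;2,3] (by decide) (by decide)) hx⟩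
    · exact ⟨not_conj (badGL !![3,0;2,3] (by decide) (by decide)) hx,
             not_conj (badGL !![3,0;0,3] (by decide) (by decide)) hx⟩
    · exact ⟨not_conj (badGL !![1,2;3,1] (by decide) (by decide)) hx,
             not_conj (badGL !![3,1;2,1] (by decide) (by decide)) hx⟩
  · intro r h1 h5 x hx
    interval_cases r
    · exact not_conj (badGL !![3,3;1,2] (by decide) (by decide)) hx
    · exact not_conj (badGL !![0,3;1,3] (by decide) (by decide)) hx
    · exact not_conj (badGL !![3,2;2,1] (by decide) (by decide)) hx
    · exact not_conj (badGL !![3,1;3,0] (by decide) (by decide)) hx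
    · exact not_conj (badGL !![2,3;1,1] (by decide) (by decide)) hx
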